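/- Fix σ, λ > 0 with λ ≤ 1. Let ξ : ℝ → ℝ² be σ-Lipschitz and set r(x,t) = |x − ξ(t)|. Then there exists a constant C₂ = C₂(σ, λ) such that for all x ∈ ℝ² and all t, ∫_{t−λ}^{t} (4π(t−s))^{−1} exp(−|x − ξ(s)|²/(4(t−s))) ds ≤ C₂ |log r(x,t)| + C₂ for r(x,t) < 1. -/

import Mathlib

/-!
Write `τ = t - s`, `r = r(x,t)` and `a = r² / 8`. The Lipschitz bound gives `r ≤ |x - ξ(s)| + στ`,
hence `|x - ξ(s)|² ≥ r² / 2 - σ²τ²`, so for `0 < τ ≤ 1` the kernel is at most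
`e^{σ²/4} (4πτ)⁻¹ e^{-a/τ} ≤ e^{σ²/4} (4π)⁻¹ (τ + a)⁻¹` (as `e^y ≥ 1 + y`). Integrating over
`0 < τ ≤ λ` gives `log (1 + λ/a) ≤ log 9 + 2 |log r|`.

When `r = 0` the kernel is bounded below by a multiple of `τ⁻¹`, so the integrand is not
integrable and the (Bochner) integral is `0`.
-/

open MeasureTheory Real Set intervalIntegral

/-- The planar heat kernel at time `τ` and distance `d`; its value at `τ = 0` is `0`. -/
noncomputable def heatKernel (τ d : ℝ) : ℝ := (4 * π * τ)⁻¹ * exp (-d ^ 2 / (4 * τ))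

lemma inv_mul_exp_neg_div_le {a τ : ℝ} (ha : 0 ≤ a) (hτ : 0 < τ) :
    τ⁻¹ * exp (-(a / τ)) ≤ (τ + a)⁻¹ := by
  have h : τ + a ≤ τ * exp (a / τ) :=
    calc τ + a = τ * (a / τ + 1) := by field_simp; ring
      _ ≤ τ * exp (a / τ) := by gcongr; exact add_one_le_exp _
  rw [exp_neg, ← mul_inv]
  exact inv_anti₀ (by positivity) h

lemma neg_sq_div_le_of_le_add {r d σ τ : ℝ} (hr : 0 ≤ r) (hτ : 0 < τ) (hτ1 : τ ≤ 1)
    (h : r ≤ d + σ * τ) : -d ^ 2 / (4 * τ) ≤ -(r ^ 2 / 8 / τ) + σ ^ 2 / 4 := by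
  have hsq : r ^ 2 / 2 ≤ d ^ 2 + σ ^ 2 * τ ^ 2 := by
    nlinarith [pow_le_pow_left₀ hr h 2, sq_nonneg (d - σ * τ)]
  have hτ2 : σ ^ 2 * τ ^ 2 ≤ σ ^ 2 * τ := by
    gcongr; nlinarith
  rw [div_le_iff₀ (by positivity)]
  field_simp
  nlinarith

lemma heatKernel_le {r d σ τ : ℝ} (hr : 0 ≤ r) (hτ : 0 < τ) (hτ1 : τ ≤ 1)
    (h : r ≤ d + σ * τ) :
    heatKernel τ d ≤ (4 * π)⁻¹ * exp (σ ^ 2 / 4) * (τ + r ^ 2 / 8)⁻¹ :=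
  calc heatKernel τ d ≤ (4 * π * τ)⁻¹ * exp (-(r ^ 2 / 8 / τ) + σ ^ 2 / 4) := by
        unfold heatKernel; gcongr; exact neg_sq_div_le_of_le_add hr hτ hτ1 h
    _ = (4 * π)⁻¹ * exp (σ ^ 2 / 4) * (τ⁻¹ * exp (-(r ^ 2 / 8 / τ))) := by
        rw [exp_add, mul_inv]; ring
    _ ≤ (4 * π)⁻¹ * exp (σ ^ 2 / 4) * (τ + r ^ 2 / 8)⁻¹ := by
        gcongr; exact inv_mul_exp_neg_div_le (by positivity) hτ

lemma inv_le_heatKernel {d σ τ : ℝ} (hτ : 0 < τ) (hτ1 : τ ≤ 1) (hd : 0 ≤ d)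
    (h : d ≤ σ * τ) : (4 * π)⁻¹ * exp (-(σ ^ 2 / 4)) * τ⁻¹ ≤ heatKernel τ d := by
  have hexp : d ^ 2 / (4 * τ) ≤ σ ^ 2 / 4 := by
    rw [div_le_iff₀ (by positivity)]
    nlinarith [pow_le_pow_left₀ hd h 2, mul_nonneg (sq_nonneg σ) hτ.le]
  calc (4 * π)⁻¹ * exp (-(σ ^ 2 / 4)) * τ⁻¹ = (4 * π * τ)⁻¹ * exp (-(σ ^ 2 / 4)) := by
        rw [mul_inv]; ring
    _ ≤ heatKernel τ d := by
        unfold heatKernel; gcongr; rw [neg_div]; linarith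

lemma integral_inv_sub_add {a lam t : ℝ} (ha : 0 < a) (hlam : 0 ≤ lam) :
    ∫ s in (t - lam)..t, (t - s + a)⁻¹ = log ((lam + a) / a) := by
  rw [integral_comp_sub_left (fun u => (u + a)⁻¹), sub_self, sub_sub_cancel,
    integral_comp_add_right (fun u => u⁻¹), zero_add, integral_inv_of_pos ha (by linarith)]

lemma not_intervalIntegrable_of_inv_sub_le {f : ℝ → ℝ} {c a t : ℝ} (hc : 0 < c) (hat : a < t)
    (h : ∀ s ∈ Ioc a t, c * (t - s)⁻¹ ≤ f s) : ¬ IntervalIntegrable f volume a t := by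
  intro hf
  have hinv : IntervalIntegrable (fun s => (s - t)⁻¹) volume a t := by
    refine (hf.const_mul c⁻¹).mono_fun' (by fun_prop) ?_
    rw [uIoc_of_le hat.le]
    filter_upwards [ae_restrict_mem measurableSet_Ioc] with s hs
    rw [norm_inv, Real.norm_eq_abs, abs_sub_comm, abs_of_nonneg (sub_nonneg.2 hs.2),
      le_inv_mul_iff₀ hc]
    exact h s hs
  rw [intervalIntegrable_sub_inv_iff] at hinv
  exact hinv.elim hat.ne (· right_mem_uIcc)

section LipschitzCurve

variable {E : Type*} [NormedAddCommGroup E] {ξ : ℝ → E} {σ lam t : ℝ}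

lemma heatKernel_lipschitz_curve_le (hξ : ∀ s₁ s₂ : ℝ, ‖ξ s₁ - ξ s₂‖ ≤ σ * |s₁ - s₂|)
    (hlam1 : lam ≤ 1) (x : E) {s : ℝ} (hs : s ∈ Ioo (t - lam) t) :
    heatKernel (t - s) ‖x - ξ s‖ ≤
      (4 * π)⁻¹ * exp (σ ^ 2 / 4) * (t - s + ‖x - ξ t‖ ^ 2 / 8)⁻¹ := by
  have hτ : 0 < t - s := sub_pos.2 hs.2
  refine heatKernel_le (norm_nonneg _) hτ (by linarith [hs.1]) ?_
  calc ‖x - ξ t‖ ≤ ‖x - ξ s‖ + ‖ξ s - ξ t‖ := norm_sub_le_norm_sub_add_norm_sub _ _ _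
    _ ≤ ‖x - ξ s‖ + σ * (t - s) := by
        grw [hξ s t, abs_sub_comm, abs_of_pos hτ]

theorem integral_heatKernel_lipschitz_curve_le
    (hξ : ∀ s₁ s₂ : ℝ, ‖ξ s₁ - ξ s₂‖ ≤ σ * |s₁ - s₂|) (hlam : 0 ≤ lam) (hlam1 : lam ≤ 1)
    (x : E) (hr : 0 < ‖x - ξ t‖)
    (hint : IntervalIntegrable (fun s => heatKernel (t - s) ‖x - ξ s‖) volume (t - lam) t) :
    ∫ s in (t - lam)..t, heatKernel (t - s) ‖x - ξ s‖ ≤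
      (4 * π)⁻¹ * exp (σ ^ 2 / 4) *
        log ((lam + ‖x - ξ t‖ ^ 2 / 8) / (‖x - ξ t‖ ^ 2 / 8)) := by
  set a := ‖x - ξ t‖ ^ 2 / 8
  have ha : 0 < a := by positivity
  have hbound : IntervalIntegrable (fun s => (t - s + a)⁻¹) volume (t - lam) t := by
    refine ContinuousOn.intervalIntegrable (ContinuousOn.inv₀ (by fun_prop) fun s hs => ?_)
    rw [uIcc_of_le (by linarith)] at hs
    linarith [hs.2]
  calc ∫ s in (t - lam)..t, heatKernel (t - s) ‖x - ξ s‖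
      ≤ ∫ s in (t - lam)..t, (4 * π)⁻¹ * exp (σ ^ 2 / 4) * (t - s + a)⁻¹ :=
        integral_mono_on_of_le_Ioo (by linarith) hint (hbound.const_mul _)
          fun s hs => heatKernel_lipschitz_curve_le hξ hlam1 x hs
    _ = (4 * π)⁻¹ * exp (σ ^ 2 / 4) * log ((lam + a) / a) := by
        rw [intervalIntegral.integral_const_mul, integral_inv_sub_add ha hlam]

theorem not_intervalIntegrable_heatKernel_lipschitz_curve
    (hξ : ∀ s₁ s₂ : ℝ, ‖ξ s₁ - ξ s₂‖ ≤ σ * |s₁ - s₂|) (hlam : 0 < lam) (hlam1 : lam ≤ 1) :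
    ¬ IntervalIntegrable (fun s => heatKernel (t - s) ‖ξ t - ξ s‖) volume (t - lam) t := by
  refine not_intervalIntegrable_of_inv_sub_le (c := (4 * π)⁻¹ * exp (-(σ ^ 2 / 4)))
    (by positivity) (by linarith) fun s hs => ?_
  rcases hs.2.eq_or_lt with rfl | hst
  · simp [heatKernel]
  · have hτ : 0 < t - s := sub_pos.2 hst
    refine inv_le_heatKernel hτ (by linarith [hs.1]) (norm_nonneg _) ?_
    simpa [abs_of_pos hτ] using hξ t s

end LipschitzCurve

lemma log_add_sq_div_sq_le {r lam : ℝ} (hr : 0 < r) (hr1 : r < 1) (hlam : 0 ≤ lam)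
    (hlam1 : lam ≤ 1) : log ((lam + r ^ 2 / 8) / (r ^ 2 / 8)) ≤ 8 * |log r| + 8 := by
  have hle : (lam + r ^ 2 / 8) / (r ^ 2 / 8) ≤ 9 / r ^ 2 := by
    rw [div_le_div_iff₀ (by positivity) (by positivity)]
    nlinarith [pow_le_one₀ hr.le hr1.le (n := 2), sq_nonneg r]
  have hlog9 : log 9 ≤ 8 := by linarith [log_le_sub_one_of_pos (by norm_num : (0 : ℝ) < 9)]
  have hlogr : log r ≤ 0 := log_nonpos hr.le hr1.le
  calc log ((lam + r ^ 2 / 8) / (r ^ 2 / 8)) ≤ log (9 / r ^ 2) :=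
        log_le_log (by positivity) hle
    _ = log 9 - 2 * log r := by
        rw [log_div (by norm_num) (by positivity), log_pow]; push_cast; ring
    _ ≤ 8 * |log r| + 8 := by rw [abs_of_nonpos hlogr]; linarith

theorem stmt_12_general (σ lam : ℝ) (hlam : 0 < lam) (hlam1 : lam ≤ 1) :
    ∃ C : ℝ, 0 < C ∧
      ∀ ξ : ℝ → EuclideanSpace ℝ (Fin 2),
        (∀ s₁ s₂ : ℝ, ‖ξ s₁ - ξ s₂‖ ≤ σ * |s₁ - s₂|) →
        ∀ (x : EuclideanSpace ℝ (Fin 2)) (t : ℝ), ‖x - ξ t‖ < 1 →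
          (∫ s in (t - lam)..t,
              (4 * Real.pi * (t - s))⁻¹ * Real.exp (-‖x - ξ s‖ ^ 2 / (4 * (t - s)))) ≤
            C * |Real.log ‖x - ξ t‖| + C := by
  set K := (4 * π)⁻¹ * exp (σ ^ 2 / 4)
  refine ⟨8 * K, by positivity, fun ξ hξ x t hr1 => ?_⟩
  change ∫ s in (t - lam)..t, heatKernel (t - s) ‖x - ξ s‖ ≤ _
  by_cases hint : IntervalIntegrable (fun s => heatKernel (t - s) ‖x - ξ s‖) volume (t - lam) t
  · have hr : 0 < ‖x - ξ t‖ := by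
      refine (norm_nonneg _).lt_of_ne fun h => ?_
      rw [eq_comm, norm_eq_zero, sub_eq_zero] at h
      subst h
      exact not_intervalIntegrable_heatKernel_lipschitz_curve hξ hlam hlam1 hint
    calc ∫ s in (t - lam)..t, heatKernel (t - s) ‖x - ξ s‖
        ≤ K * log ((lam + ‖x - ξ t‖ ^ 2 / 8) / (‖x - ξ t‖ ^ 2 / 8)) :=
          integral_heatKernel_lipschitz_curve_le hξ hlam.le hlam1 x hr hint
      _ ≤ K * (8 * |log ‖x - ξ t‖| + 8) := by
          gcongr; exact log_add_sq_div_sq_le hr hr1 hlam.le hlam1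
      _ = 8 * K * |log ‖x - ξ t‖| + 8 * K := by ring
  · rw [integral_undef hint]
    positivity

/-- Time integral of the 2-dimensional heat kernel along a `σ`-Lipschitz curve of
singularities: with `r(x,t) = |x − ξ(t)|`, there is `C₂ = C₂(σ,λ)` such that
`∫_{t−λ}^t (4π(t−s))⁻¹ e^{−|x−ξ(s)|²/(4(t−s))} ds ≤ C₂|log r(x,t)| + C₂` when `r(x,t) < 1`. -/
theorem stmt_12 (σ lam : ℝ) (hσ : 0 < σ) (hlam : 0 < lam) (hlam1 : lam ≤ 1) :
    ∃ C : ℝ, 0 < C ∧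
      ∀ ξ : ℝ → EuclideanSpace ℝ (Fin 2),
        (∀ s₁ s₂ : ℝ, ‖ξ s₁ - ξ s₂‖ ≤ σ * |s₁ - s₂|) →
        ∀ (x : EuclideanSpace ℝ (Fin 2)) (t : ℝ), ‖x - ξ t‖ < 1 →
          (∫ s in (t - lam)..t,
              (4 * Real.pi * (t - s))⁻¹ * Real.exp (-‖x - ξ s‖ ^ 2 / (4 * (t - s)))) ≤
            C * |Real.log ‖x - ξ t‖| + C :=
  stmt_12_general σ lam hlam hlam1
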